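/- Let $W^{x,y,t}$ be a Brownian bridge on $[0,t]$ from $x$ to $y$ with $y\neq 0$, and $g:=\sup\{s\leq t: W^{x,y,t}_s = 0\}$ (with $\sup\emptyset:=0$). Then $\mathbb{P}(g\leq s) = 1 - e^{-xy/t}\left(e^{|xy|/t}\,\Phi\!\left(-|x|\sqrt{\tfrac{t-s}{st}} - |y|\sqrt{\tfrac{s}{t(t-s)}}\right) + e^{-|xy|/t}\,\Phi\!\left(|x|\sqrt{\tfrac{t-s}{st}} - |y|\sqrt{\tfrac{s}{t(t-s)}}\right)\right)$ for $s\in(0,t)$; in particular $\mathbb{P}(g=0)=1-e^{-(xy+|xy|)/t}$. -/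

import Mathlib

open MeasureTheory Real

/-- Standard normal CDF. -/
noncomputable def stdNormalCdf (x : ℝ) : ℝ :=
  ∫ u in Set.Iic x, (Real.sqrt (2 * Real.pi))⁻¹ * Real.exp (-u ^ 2 / 2)

/-- Density on `(0,t)` of the last zero of a Brownian bridge from `x` to `y ≠ 0` on `[0,t]`. -/
noncomputable def lastZeroBridgeDensity (x y t s : ℝ) : ℝ :=
  |y| * Real.sqrt t / Real.sqrt (2 * Real.pi) * Real.exp ((y - x) ^ 2 / (2 * t))
    * (1 / (Real.sqrt s * (t - s) ^ ((3 : ℝ) / 2)))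
    * Real.exp (-x ^ 2 / (2 * s)) * Real.exp (-y ^ 2 / (2 * (t - s)))

/-!
The closed form is the tail `G(s) = ℙ(g > s)` of the stated law. With
`p(s) = √((t - s)/(s t))` and `q(s) = √(s/(t (t - s)))` one has `p q = 1/t`, so the two Gaussian
terms of `G` have proportional densities, the `p'`-contributions to `G'` cancel, and
`G' = -density` on `(0, t)`. Moreover `G(0+) = exp(-(xy + |xy|)/t)` (as `p → ∞`, `q → 0`) and
`G(t-) = 0` (as `p → 0`, `|y| q → ∞`). The fundamental theorem of calculus on open
intervals then gives the mass of the density on `(0, s]` and on `(0, t)`; the atom at `0` carries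
the rest.
-/

open Set Filter Topology ProbabilityTheory

lemma stdNormalCdf_eq_integral_gaussianPDFReal (x : ℝ) :
    stdNormalCdf x = ∫ u in Iic x, gaussianPDFReal 0 1 u := by
  simp [stdNormalCdf, gaussianPDFReal]

lemma stdNormalCdf_eq_cdf : stdNormalCdf = cdf (gaussianReal 0 1) := by
  ext x
  rw [cdf_eq_real, measureReal_def, gaussianReal_apply_eq_integral 0 one_ne_zero,
    ENNReal.toReal_ofReal (setIntegral_nonneg measurableSet_Iic
      fun u _ => gaussianPDFReal_nonneg 0 1 u), stdNormalCdf_eq_integral_gaussianPDFReal]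

lemma hasDerivAt_stdNormalCdf (x : ℝ) : HasDerivAt stdNormalCdf (gaussianPDFReal 0 1 x) x := by
  have hint := integrable_gaussianPDFReal 0 1
  have hcont : Continuous (gaussianPDFReal 0 1) := by
    rw [gaussianPDFReal_def]; fun_prop
  have hΦ : ∀ z, stdNormalCdf 0 + ∫ u in (0 : ℝ)..z, gaussianPDFReal 0 1 u = stdNormalCdf z := by
    intro z
    rw [← intervalIntegral.integral_Iic_sub_Iic hint.integrableOn hint.integrableOn,
      stdNormalCdf_eq_integral_gaussianPDFReal, stdNormalCdf_eq_integral_gaussianPDFReal]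
    ring
  exact ((intervalIntegral.integral_hasDerivAt_right hint.intervalIntegrable
    (hcont.stronglyMeasurableAtFilter _ _) hcont.continuousAt).const_add _).congr_of_eventuallyEq
    (Eventually.of_forall fun z => (hΦ z).symm)

lemma stdNormalCdf_neg (x : ℝ) : stdNormalCdf (-x) = 1 - stdNormalCdf x := by
  have : NullSingletonClass (gaussianReal 0 1) := nullSingletonClass_gaussianReal one_ne_zero
  have hsymm : (gaussianReal 0 1).map (fun u => -u) = gaussianReal 0 1 := by
    simpa using gaussianReal_map_neg (μ := 0) (v := 1)
  rw [stdNormalCdf_eq_cdf, cdf_eq_real, cdf_eq_real, ← hsymm,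
    map_measureReal_apply measurable_neg measurableSet_Iic, hsymm, neg_preimage, neg_Iic, neg_neg,
    ← compl_Iio, probReal_compl_eq_one_sub measurableSet_Iio, measureReal_congr Iio_ae_eq_Iic]

lemma tendsto_stdNormalCdf_atBot : Tendsto stdNormalCdf atBot (𝓝 0) :=
  stdNormalCdf_eq_cdf ▸ tendsto_cdf_atBot _

lemma tendsto_stdNormalCdf_atTop : Tendsto stdNormalCdf atTop (𝓝 1) :=
  stdNormalCdf_eq_cdf ▸ tendsto_cdf_atTop _

lemma continuous_stdNormalCdf : Continuous stdNormalCdf :=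
  continuous_iff_continuousAt.mpr fun x => (hasDerivAt_stdNormalCdf x).continuousAt

lemma stdNormalCdf_zero : stdNormalCdf 0 = 1 / 2 := by
  have h := stdNormalCdf_neg 0
  rw [neg_zero] at h
  linarith

section FTC

variable {f f' : ℝ → ℝ} {a b fa fb : ℝ}

theorem integrableOn_Ioo_deriv_of_nonneg_of_tendsto (hab : a < b)
    (hderiv : ∀ x ∈ Ioo a b, HasDerivAt f (f' x) x) (hnonneg : ∀ x ∈ Ioo a b, 0 ≤ f' x)
    (ha : Tendsto f (𝓝[>] a) (𝓝 fa)) (hb : Tendsto f (𝓝[<] b) (𝓝 fb)) :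
    IntegrableOn f' (Ioo a b) := by
  set F : ℝ → ℝ := Function.update (Function.update f a fa) b fb
  have hF : EqOn F f (Ioo a b) := fun x hx => by
    simp only [F, Function.update_of_ne hx.2.ne, Function.update_of_ne hx.1.ne']
  have hcont : ContinuousOn F (Icc a b) := by
    rw [continuousOn_update_iff, continuousOn_update_iff, Icc_sdiff_right, Ico_sdiff_left]
    refine ⟨⟨fun z hz => (hderiv z hz).continuousAt.continuousWithinAt, ?_⟩, ?_⟩
    · exact fun _ => ha.mono_left (nhdsWithin_mono _ Ioo_subset_Ioi_self)
    · rintro -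
      refine (hb.congr' ?_).mono_left (nhdsWithin_mono _ Ico_subset_Iio_self)
      filter_upwards [Ioo_mem_nhdsLT hab] with _ hz using
        (Function.update_of_ne hz.1.ne' _ _).symm
  have hFderiv : ∀ x ∈ Ioo a b, HasDerivAt F (f' x) x := fun x hx =>
    (hderiv x hx).congr_of_eventuallyEq (eventuallyEq_of_mem (Ioo_mem_nhds hx.1 hx.2) hF)
  exact (intervalIntegral.integrableOn_deriv_of_nonneg hcont hFderiv hnonneg).mono_set
    Ioo_subset_Ioc_self

theorem integral_Ioo_eq_sub_of_hasDerivAt_of_tendsto (hab : a < b)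
    (hderiv : ∀ x ∈ Ioo a b, HasDerivAt f (f' x) x) (hint : IntegrableOn f' (Ioo a b))
    (ha : Tendsto f (𝓝[>] a) (𝓝 fa)) (hb : Tendsto f (𝓝[<] b) (𝓝 fb)) :
    ∫ x in Ioo a b, f' x = fb - fa := by
  rw [← integral_Ioc_eq_integral_Ioo, ← intervalIntegral.integral_of_le hab.le]
  exact intervalIntegral.integral_eq_sub_of_hasDerivAt_of_tendsto hab hderiv
    ((intervalIntegrable_iff_integrableOn_Ioo_of_le hab.le).mpr hint) ha hb

end FTC

section ScaleLimits

variable {t : ℝ}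

lemma tendsto_sqrt_sub_div_mul_nhdsGT_zero (ht : 0 < t) :
    Tendsto (fun s => √((t - s) / (s * t))) (𝓝[>] 0) atTop := by
  refine tendsto_sqrt_atTop.comp ?_
  have h1 : Tendsto (fun s => (t - s) / t) (𝓝[>] 0) (𝓝 1) := by
    have : ContinuousAt (fun s => (t - s) / t) 0 := by fun_prop (disch := positivity)
    simpa [ht.ne'] using this.tendsto.mono_left nhdsWithin_le_nhds
  refine (h1.pos_mul_atTop one_pos tendsto_inv_nhdsGT_zero).congr fun s => ?_
  field_simp

lemma tendsto_sqrt_sub_div_mul_nhdsLT (ht : 0 < t) :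
    Tendsto (fun s => √((t - s) / (s * t))) (𝓝[<] t) (𝓝 0) := by
  have : ContinuousAt (fun s => √((t - s) / (s * t))) t := by fun_prop (disch := positivity)
  simpa using this.tendsto.mono_left nhdsWithin_le_nhds

lemma tendsto_sqrt_div_mul_sub_nhdsGT_zero (ht : 0 < t) :
    Tendsto (fun s => √(s / (t * (t - s)))) (𝓝[>] 0) (𝓝 0) := by
  have : ContinuousAt (fun s => √(s / (t * (t - s)))) 0 := by fun_prop (disch := simp [ht.ne'])
  simpa using this.tendsto.mono_left nhdsWithin_le_nhds

lemma tendsto_sqrt_div_mul_sub_nhdsLT (ht : 0 < t) :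
    Tendsto (fun s => √(s / (t * (t - s)))) (𝓝[<] t) atTop := by
  refine tendsto_sqrt_atTop.comp ?_
  have h1 : Tendsto (fun s => s / t) (𝓝[<] t) (𝓝 1) := by
    have : ContinuousAt (fun s => s / t) t := by fun_prop
    simpa [ht.ne'] using this.tendsto.mono_left nhdsWithin_le_nhds
  have h2 : Tendsto (fun s => t - s) (𝓝[<] t) (𝓝[>] 0) := by
    refine tendsto_nhdsWithin_iff.mpr ⟨?_, eventually_nhdsWithin_of_forall fun s hs => ?_⟩
    · simpa using ((continuous_sub_left t).tendsto t).mono_left nhdsWithin_le_nhds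
    · exact sub_pos.mpr (mem_Iio.mp hs)
  refine (h1.pos_mul_atTop one_pos (tendsto_inv_nhdsGT_zero.comp h2)).congr fun s => ?_
  simp only [Function.comp_apply]
  field_simp

end ScaleLimits

lemma exp_mul_gaussianPDFReal_neg_sub (u v : ℝ) :
    exp (u * v) * gaussianPDFReal 0 1 (-u - v) = exp (-(u * v)) * gaussianPDFReal 0 1 (u - v) := by
  simp only [gaussianPDFReal, NNReal.coe_one, sub_zero, mul_one]
  rw [mul_left_comm, ← exp_add, mul_left_comm (exp _), ← exp_add]
  congr 2
  ring

lemma hasDerivAt_exp_mul_stdNormalCdf_add {p q : ℝ → ℝ} {p' q' a b c s : ℝ}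
    (hp : HasDerivAt p p' s) (hq : HasDerivAt q q' s) (hc : a * p s * (b * q s) = c) :
    HasDerivAt (fun u => exp c * stdNormalCdf (-a * p u - b * q u)
        + exp (-c) * stdNormalCdf (a * p u - b * q u))
      (-(2 * b * q') * (exp (-c) * gaussianPDFReal 0 1 (a * p s - b * q s))) s := by
  have hA := (hasDerivAt_stdNormalCdf _).comp s ((hp.const_mul (-a)).sub (hq.const_mul b))
  have hB := (hasDerivAt_stdNormalCdf _).comp s ((hp.const_mul a).sub (hq.const_mul b))
  have key := exp_mul_gaussianPDFReal_neg_sub (a * p s) (b * q s)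
  rw [hc, ← neg_mul] at key
  refine ((hA.const_mul (exp c)).add (hB.const_mul (exp (-c)))).congr_deriv ?_
  linear_combination (-a * p' - b * q') * key

noncomputable def lastZeroBridgeTail (x y t s : ℝ) : ℝ :=
  exp (-(x * y) / t) *
    (exp (|x * y| / t) * stdNormalCdf (-|x| * √((t - s) / (s * t)) - |y| * √(s / (t * (t - s))))
      + exp (-|x * y| / t) * stdNormalCdf (|x| * √((t - s) / (s * t)) - |y| * √(s / (t * (t - s)))))

section Derivative

variable {x y t s : ℝ}

lemma sqrt_sub_div_mul_mul_sqrt_div_mul_sub (hs : 0 < s) (hst : s < t) :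
    √((t - s) / (s * t)) * √(s / (t * (t - s))) = 1 / t := by
  have ht : 0 < t := hs.trans hst
  have hts : 0 < t - s := sub_pos.mpr hst
  rw [← sqrt_mul (by positivity), show (t - s) / (s * t) * (s / (t * (t - s))) = (1 / t) ^ 2 by
    field_simp, sqrt_sq (by positivity)]

lemma lastZeroBridgeDensity_eq_exp_mul_gaussianPDFReal (hs : 0 < s) (hst : s < t) :
    lastZeroBridgeDensity x y t s
      = exp (-(x * y) / t) * (2 * |y| * (1 / (t - s) ^ 2 / (2 * √(s / (t * (t - s))))))
        * (exp (-|x * y| / t)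
          * gaussianPDFReal 0 1 (|x| * √((t - s) / (s * t)) - |y| * √(s / (t * (t - s))))) := by
  have ht : 0 < t := hs.trans hst
  have hts : 0 < t - s := sub_pos.mpr hst
  have hPQ := sqrt_sub_div_mul_mul_sqrt_div_mul_sub hs hst
  set P := (t - s) / (s * t) with hP
  set Q := s / (t * (t - s)) with hQ
  have hB : (|x| * √P - |y| * √Q) ^ 2 = x ^ 2 * P + y ^ 2 * Q - 2 * (|x * y| / t) := by
    rw [abs_mul]
    linear_combination |x| ^ 2 * sq_sqrt (by positivity : 0 ≤ P) + P * sq_abs x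
      + |y| ^ 2 * sq_sqrt (by positivity : 0 ≤ Q) + Q * sq_abs y - 2 * |x| * |y| * hPQ
  have hexp : exp (-(x * y) / t) * exp (-|x * y| / t) * exp (-(|x| * √P - |y| * √Q) ^ 2 / 2)
      = exp ((y - x) ^ 2 / (2 * t)) * exp (-x ^ 2 / (2 * s)) * exp (-y ^ 2 / (2 * (t - s))) := by
    rw [hB, ← exp_add, ← exp_add, ← exp_add, ← exp_add, hP, hQ]
    congr 1
    field_simp
    ring
  have hcoef : |y| * √t / √(2 * π) * (1 / (√s * (t - s) ^ ((3 : ℝ) / 2)))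
      = 2 * |y| * (1 / (t - s) ^ 2 / (2 * √Q)) * (√(2 * π))⁻¹ := by
    have hsqrt : √(t - s) ^ 2 = t - s := sq_sqrt hts.le
    rw [hQ, sqrt_div hs.le, sqrt_mul ht.le, show (3 : ℝ) / 2 = 1 + 1 / 2 by norm_num,
      rpow_add hts, rpow_one, ← sqrt_eq_rpow]
    field_simp
    rw [hsqrt]
  calc lastZeroBridgeDensity x y t s
      = |y| * √t / √(2 * π) * (1 / (√s * (t - s) ^ ((3 : ℝ) / 2)))
          * (exp ((y - x) ^ 2 / (2 * t)) * exp (-x ^ 2 / (2 * s))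
            * exp (-y ^ 2 / (2 * (t - s)))) := by
        rw [lastZeroBridgeDensity]; ring
    _ = _ := by
        rw [hcoef, ← hexp]
        simp only [gaussianPDFReal, NNReal.coe_one, sub_zero, mul_one]
        ring

lemma hasDerivAt_lastZeroBridgeTail (hs : 0 < s) (hst : s < t) :
    HasDerivAt (lastZeroBridgeTail x y t) (-lastZeroBridgeDensity x y t s) s := by
  have ht : 0 < t := hs.trans hst
  have hts : 0 < t - s := sub_pos.mpr hst
  obtain ⟨p', hp⟩ : ∃ p', HasDerivAt (fun u => √((t - u) / (u * t))) p' s :=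
    ⟨_, (((hasDerivAt_id s).const_sub t).div ((hasDerivAt_id s).mul_const t)
      (by positivity)).sqrt (div_pos hts (mul_pos hs ht)).ne'⟩
  have hq : HasDerivAt (fun u => √(u / (t * (t - u))))
      (1 / (t - s) ^ 2 / (2 * √(s / (t * (t - s))))) s := by
    refine (((hasDerivAt_id s).div (((hasDerivAt_id s).const_sub t).const_mul t)
      (by positivity)).sqrt (div_pos hs (mul_pos ht hts)).ne').congr_deriv ?_
    simp only [Pi.div_apply, id]
    field_simp
    ring
  have hc : |x| * √((t - s) / (s * t)) * (|y| * √(s / (t * (t - s)))) = |x * y| / t := by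
    rw [abs_mul, mul_mul_mul_comm, sqrt_sub_div_mul_mul_sqrt_div_mul_sub hs hst, mul_one_div]
  have h := (hasDerivAt_exp_mul_stdNormalCdf_add hp hq hc).const_mul (exp (-(x * y) / t))
  rw [← neg_div] at h
  refine h.congr_deriv ?_
  rw [lastZeroBridgeDensity_eq_exp_mul_gaussianPDFReal hs hst]
  ring

end Derivative

section TailLimits

variable {x y t : ℝ}

lemma tendsto_lastZeroBridgeTail_nhdsLT (hy : y ≠ 0) (ht : 0 < t) :
    Tendsto (lastZeroBridgeTail x y t) (𝓝[<] t) (𝓝 0) := by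
  have hq : Tendsto (fun s => -(|y| * √(s / (t * (t - s))))) (𝓝[<] t) atBot :=
    tendsto_neg_atTop_atBot.comp
      ((tendsto_sqrt_div_mul_sub_nhdsLT ht).const_mul_atTop (abs_pos.mpr hy))
  have hA := ((tendsto_sqrt_sub_div_mul_nhdsLT ht).const_mul (-|x|)).add_atBot hq
  have hB := ((tendsto_sqrt_sub_div_mul_nhdsLT ht).const_mul |x|).add_atBot hq
  have h := (((tendsto_stdNormalCdf_atBot.comp hA).const_mul (exp (|x * y| / t))).add
    ((tendsto_stdNormalCdf_atBot.comp hB).const_mul (exp (-|x * y| / t)))).const_mul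
    (exp (-(x * y) / t))
  unfold lastZeroBridgeTail
  simpa [Function.comp_def, ← sub_eq_add_neg] using h

lemma tendsto_lastZeroBridgeTail_nhdsGT_zero (ht : 0 < t) :
    Tendsto (lastZeroBridgeTail x y t) (𝓝[>] 0) (𝓝 (exp (-(x * y + |x * y|) / t))) := by
  have hq : Tendsto (fun s => -(|y| * √(s / (t * (t - s))))) (𝓝[>] 0) (𝓝 0) := by
    simpa using ((tendsto_sqrt_div_mul_sub_nhdsGT_zero ht).const_mul |y|).neg
  rcases eq_or_ne x 0 with rfl | hx
  · have h := ((continuous_stdNormalCdf.tendsto 0).comp hq).const_mul 2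
    unfold lastZeroBridgeTail
    simpa [Function.comp_def, stdNormalCdf_zero, ← two_mul] using h
  have hp := tendsto_sqrt_sub_div_mul_nhdsGT_zero ht
  have hA := (tendsto_neg_atTop_atBot.comp (hp.const_mul_atTop (abs_pos.mpr hx))).atBot_add hq
  have hB := (hp.const_mul_atTop (abs_pos.mpr hx)).atTop_add hq
  have h := (((tendsto_stdNormalCdf_atBot.comp hA).const_mul (exp (|x * y| / t))).add
    ((tendsto_stdNormalCdf_atTop.comp hB).const_mul (exp (-|x * y| / t)))).const_mul
    (exp (-(x * y) / t))
  rw [neg_add, add_div, exp_add]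
  unfold lastZeroBridgeTail
  simpa [Function.comp_def, ← sub_eq_add_neg] using h

end TailLimits

section Integrals

variable {x y t s : ℝ}

lemma lastZeroBridgeDensity_nonneg (hs : 0 < s) (hst : s < t) :
    0 ≤ lastZeroBridgeDensity x y t s := by
  have hts : 0 < t - s := sub_pos.mpr hst
  unfold lastZeroBridgeDensity
  positivity

lemma hasDerivAt_neg_lastZeroBridgeTail (hs : 0 < s) (hst : s < t) :
    HasDerivAt (fun u => -lastZeroBridgeTail x y t u) (lastZeroBridgeDensity x y t s) s :=
  (hasDerivAt_lastZeroBridgeTail hs hst).neg.congr_deriv (neg_neg _)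

lemma integrableOn_lastZeroBridgeDensity (hy : y ≠ 0) (ht : 0 < t) :
    IntegrableOn (lastZeroBridgeDensity x y t) (Ioo 0 t) :=
  integrableOn_Ioo_deriv_of_nonneg_of_tendsto ht
    (fun _ hu => hasDerivAt_neg_lastZeroBridgeTail hu.1 hu.2)
    (fun _ hu => lastZeroBridgeDensity_nonneg hu.1 hu.2)
    (tendsto_lastZeroBridgeTail_nhdsGT_zero ht).neg (tendsto_lastZeroBridgeTail_nhdsLT hy ht).neg

lemma integral_lastZeroBridgeDensity_Ioo_zero_self (hy : y ≠ 0) (ht : 0 < t) :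
    ∫ u in Ioo 0 t, lastZeroBridgeDensity x y t u = exp (-(x * y + |x * y|) / t) := by
  simpa using integral_Ioo_eq_sub_of_hasDerivAt_of_tendsto ht
    (fun _ hu => hasDerivAt_neg_lastZeroBridgeTail hu.1 hu.2)
    (integrableOn_lastZeroBridgeDensity hy ht)
    (tendsto_lastZeroBridgeTail_nhdsGT_zero ht).neg (tendsto_lastZeroBridgeTail_nhdsLT hy ht).neg

lemma integral_lastZeroBridgeDensity_Ioo_zero (hy : y ≠ 0) (hs : 0 < s) (hst : s < t) :
    ∫ u in Ioo 0 s, lastZeroBridgeDensity x y t u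
      = exp (-(x * y + |x * y|) / t) - lastZeroBridgeTail x y t s := by
  have ht : 0 < t := hs.trans hst
  have hcont : Tendsto (lastZeroBridgeTail x y t) (𝓝[<] s) (𝓝 (lastZeroBridgeTail x y t s)) :=
    (hasDerivAt_lastZeroBridgeTail hs hst).continuousAt.tendsto.mono_left nhdsWithin_le_nhds
  rw [integral_Ioo_eq_sub_of_hasDerivAt_of_tendsto hs
    (fun _ hu => hasDerivAt_neg_lastZeroBridgeTail hu.1 (hu.2.trans hst))
    ((integrableOn_lastZeroBridgeDensity hy ht).mono_set (Ioo_subset_Ioo_right hst.le))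
    (tendsto_lastZeroBridgeTail_nhdsGT_zero ht).neg hcont.neg]
  ring

lemma lastZeroBridgeTail_le (hy : y ≠ 0) (hs : 0 < s) (hst : s < t) :
    lastZeroBridgeTail x y t s ≤ exp (-(x * y + |x * y|) / t) :=
  sub_nonneg.mp <| integral_lastZeroBridgeDensity_Ioo_zero hy hs hst ▸ setIntegral_nonneg
    measurableSet_Ioo fun _ hu => lastZeroBridgeDensity_nonneg hu.1 (hu.2.trans hst)

lemma lintegral_lastZeroBridgeDensity_Ioc_zero (hy : y ≠ 0) (hs : 0 < s) (hst : s < t) :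
    ∫⁻ u in Ioc 0 s, ENNReal.ofReal (lastZeroBridgeDensity x y t u)
      = ENNReal.ofReal (exp (-(x * y + |x * y|) / t) - lastZeroBridgeTail x y t s) := by
  rw [setLIntegral_congr Ioo_ae_eq_Ioc.symm, ← integral_lastZeroBridgeDensity_Ioo_zero hy hs hst,
    ofReal_integral_eq_lintegral_ofReal
      ((integrableOn_lastZeroBridgeDensity hy (hs.trans hst)).mono_set
        (Ioo_subset_Ioo_right hst.le))
      (ae_restrict_of_forall_mem measurableSet_Ioo fun _ hu =>
        lastZeroBridgeDensity_nonneg hu.1 (hu.2.trans hst))]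

end Integrals

theorem cdf_last_zero_brownian_bridge_general
    {Ω : Type*} [MeasurableSpace Ω] (μ : Measure Ω)
    (x y t : ℝ) (hy : y ≠ 0) (ht : 0 < t)
    (g : Ω → ℝ) (hg : Measurable g)
    (hlaw : μ.map g
      = ENNReal.ofReal (1 - ∫ s in Set.Ioo (0 : ℝ) t, lastZeroBridgeDensity x y t s)
          • Measure.dirac (0 : ℝ)
        + volume.withDensity (fun s =>
            Set.indicator (Set.Ioo (0 : ℝ) t)
              (fun s => ENNReal.ofReal (lastZeroBridgeDensity x y t s)) s)) :
    (∀ s : ℝ, 0 < s → s < t →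
      μ {ω | g ω ≤ s}
        = ENNReal.ofReal
            (1 - Real.exp (-(x * y) / t)
              * (Real.exp (|x * y| / t)
                  * stdNormalCdf (-|x| * Real.sqrt ((t - s) / (s * t))
                      - |y| * Real.sqrt (s / (t * (t - s))))
                + Real.exp (-|x * y| / t)
                  * stdNormalCdf (|x| * Real.sqrt ((t - s) / (s * t))
                      - |y| * Real.sqrt (s / (t * (t - s))))))) ∧
    μ {ω | g ω = 0} = ENNReal.ofReal (1 - Real.exp (-(x * y + |x * y|) / t)) := by
  set K := exp (-(x * y + |x * y|) / t)
  have hK : K ≤ 1 :=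
    exp_le_one_iff.mpr (div_nonpos_of_nonpos_of_nonneg (by linarith [neg_abs_le (x * y)]) ht.le)
  have hμ : ∀ A, MeasurableSet A → μ (g ⁻¹' A) = ENNReal.ofReal (1 - K) * Measure.dirac 0 A
      + ∫⁻ u in Ioo 0 t ∩ A, ENNReal.ofReal (lastZeroBridgeDensity x y t u) := fun A hA => by
    rw [← Measure.map_apply hg hA, hlaw, integral_lastZeroBridgeDensity_Ioo_zero_self hy ht,
      Measure.add_apply, Measure.smul_apply, smul_eq_mul, withDensity_apply _ hA,
      lintegral_indicator measurableSet_Ioo, Measure.restrict_restrict measurableSet_Ioo]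
  refine ⟨fun s hs hst => ?_, ?_⟩
  · have hIoc : Ioo 0 t ∩ Iic s = Ioc 0 s :=
      Set.ext fun u => ⟨fun h => ⟨h.1.1, h.2⟩, fun h => ⟨⟨h.1, h.2.trans_lt hst⟩, h.2⟩⟩
    change μ (g ⁻¹' Iic s) = _
    rw [hμ _ measurableSet_Iic, Measure.dirac_apply_of_mem (mem_Iic.mpr hs.le), mul_one, hIoc,
      lintegral_lastZeroBridgeDensity_Ioc_zero hy hs hst, ← ENNReal.ofReal_add (sub_nonneg.mpr hK)
        (sub_nonneg.mpr (lastZeroBridgeTail_le hy hs hst))]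
    congr 1
    rw [lastZeroBridgeTail]
    ring
  · change μ (g ⁻¹' {0}) = _
    rw [hμ _ (measurableSet_singleton 0), Measure.dirac_apply_of_mem (mem_singleton 0), mul_one,
      show Ioo 0 t ∩ {0} = ∅ by simp, Measure.restrict_empty, lintegral_zero_measure, add_zero]

/-- CDF of the last zero `g` of a Brownian bridge on `[0,t]` from `x` to `y ≠ 0`
(with `sup ∅ := 0`, the law of `g` being an atom at `0` plus the stated density). -/
theorem cdf_last_zero_brownian_bridge
    {Ω : Type*} [MeasurableSpace Ω] (μ : Measure Ω) [IsProbabilityMeasure μ]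
    (x y t : ℝ) (hy : y ≠ 0) (ht : 0 < t)
    (g : Ω → ℝ) (hg : Measurable g)
    (hlaw : μ.map g
      = ENNReal.ofReal (1 - ∫ s in Set.Ioo (0 : ℝ) t, lastZeroBridgeDensity x y t s)
          • Measure.dirac (0 : ℝ)
        + volume.withDensity (fun s =>
            Set.indicator (Set.Ioo (0 : ℝ) t)
              (fun s => ENNReal.ofReal (lastZeroBridgeDensity x y t s)) s)) :
    (∀ s : ℝ, 0 < s → s < t →
      μ {ω | g ω ≤ s}
        = ENNReal.ofReal
            (1 - Real.exp (-(x * y) / t)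
              * (Real.exp (|x * y| / t)
                  * stdNormalCdf (-|x| * Real.sqrt ((t - s) / (s * t))
                      - |y| * Real.sqrt (s / (t * (t - s))))
                + Real.exp (-|x * y| / t)
                  * stdNormalCdf (|x| * Real.sqrt ((t - s) / (s * t))
                      - |y| * Real.sqrt (s / (t * (t - s))))))) ∧
    μ {ω | g ω = 0} = ENNReal.ofReal (1 - Real.exp (-(x * y + |x * y|) / t)) :=
  cdf_last_zero_brownian_bridge_general μ x y t hy ht g hg hlaw
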